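/- arXiv:1912.06875 — 4 statements merged into one kernel-verified Lean document; each statement's English description precedes it below -/
import Mathlib

section
/- Let K and K′ be stabilizing policies with ρ(A−BK) < 1 and ρ(A−BK′) < 1, and let x′_t = (A−BK′)^t x for x ∈ R^d. Define the advantage A_{K,K′}(z) = 2 zᵀ(K′−K)ᵀE_K z + zᵀ(K′−K)ᵀ(R + Bᵀ P_K B)(K′−K) z, where E_K = (R + Bᵀ P_K B)K − Bᵀ P_K A. Then xᵀ P_{K′} x − xᵀ P_K x = Σ_{t≥0} A_{K,K′}(x′_t). -/
open Matrix Filter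
open scoped ENNReal NNReal Topology

lemma pow_entry_bound (d : ℕ) (M : Matrix (Fin d) (Fin d) ℝ)
    (hρ : spectralRadius ℂ (M.map (algebraMap ℝ ℂ)) < 1) :
    ∃ c : ℝ, 0 ≤ c ∧ c < 1 ∧ ∀ᶠ t in atTop, ∀ i j, |(M ^ t) i j| ≤ c ^ t := by
  letI : NormedRing (Matrix (Fin d) (Fin d) ℂ) := Matrix.linftyOpNormedRing
  letI : NormedAlgebra ℂ (Matrix (Fin d) (Fin d) ℂ) := Matrix.linftyOpNormedAlgebra
  set Mc : Matrix (Fin d) (Fin d) ℂ := M.map (algebraMap ℝ ℂ) with hMc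
  obtain ⟨c, hc1, hc2⟩ := ENNReal.lt_iff_exists_nnreal_btwn.mp hρ
  have hc2' : c < 1 := by exact_mod_cast hc2
  have hgel := spectrum.pow_nnnorm_pow_one_div_tendsto_nhds_spectralRadius Mc
  have hev : ∀ᶠ n : ℕ in atTop, ((‖Mc ^ n‖₊ : ℝ≥0∞)) ^ (1 / (n:ℝ)) < (c : ℝ≥0∞) :=
    hgel.eventually_lt_const hc1
  have hev2 : ∀ᶠ n : ℕ in atTop, ∀ i j, |(M ^ n) i j| ≤ (c:ℝ) ^ n := by
    filter_upwards [hev, eventually_ge_atTop 1] with n hn hn1 i j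
    have hnR : (0:ℝ) < (n:ℝ) := by exact_mod_cast hn1
    have h1 : (((‖Mc ^ n‖₊ : ℝ≥0∞)) ^ (1 / (n:ℝ))) ^ (n:ℝ) < ((c : ℝ≥0∞)) ^ (n:ℝ) :=
      ENNReal.rpow_lt_rpow hn hnR
    rw [← ENNReal.rpow_mul, one_div, inv_mul_cancel₀ hnR.ne', ENNReal.rpow_one,
      ENNReal.rpow_natCast, ← ENNReal.coe_pow, ENNReal.coe_lt_coe] at h1
    have hMpow : Mc ^ n = (M ^ n).map (algebraMap ℝ ℂ) := by
      simp only [hMc, ← RingHom.mapMatrix_apply, ← map_pow]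
    have hent : ‖(Mc ^ n) i j‖₊ ≤ ‖Mc ^ n‖₊ := by
      rw [Matrix.linfty_opNNNorm_def]
      refine le_trans ?_ (Finset.le_sup (Finset.mem_univ i))
      exact Finset.single_le_sum (f := fun j => ‖(Mc ^ n) i j‖₊) (fun _ _ => zero_le)
        (Finset.mem_univ j)
    have : |(M ^ n) i j| = ‖(Mc ^ n) i j‖ := by
      rw [hMpow]; simp [Matrix.map_apply, Complex.norm_real]
    rw [this]
    calc ‖(Mc ^ n) i j‖ ≤ ‖Mc ^ n‖ := hent
      _ ≤ (c:ℝ) ^ n := by exact_mod_cast h1.le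
  exact ⟨c, c.coe_nonneg, hc2', hev2⟩

lemma quad_abs_bound (d : ℕ) (G : Matrix (Fin d) (Fin d) ℝ) (z : Fin d → ℝ) (b : ℝ)
    (hb0 : 0 ≤ b) (hb : ∀ i, |z i| ≤ b) :
    |z ⬝ᵥ G *ᵥ z| ≤ (∑ i, ∑ j, |G i j|) * b ^ 2 := by
  have h : z ⬝ᵥ G *ᵥ z = ∑ i, ∑ j, z i * (G i j * z j) := by
    simp [dotProduct, Matrix.mulVec, Finset.mul_sum]
  rw [h, Finset.sum_mul]
  refine (Finset.abs_sum_le_sum_abs _ _).trans (Finset.sum_le_sum fun i _ => ?_)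
  rw [Finset.sum_mul]
  refine (Finset.abs_sum_le_sum_abs _ _).trans (Finset.sum_le_sum fun j _ => ?_)
  rw [abs_mul, abs_mul]
  have h1 := hb i
  have h2 := hb j
  have h3 : (0:ℝ) ≤ |G i j| := abs_nonneg _
  have h4 : (0:ℝ) ≤ |z i| := abs_nonneg _
  have h5 : (0:ℝ) ≤ |z j| := abs_nonneg _
  calc |z i| * (|G i j| * |z j|)
      ≤ b * (|G i j| * b) :=
        mul_le_mul h1 (mul_le_mul_of_nonneg_left h2 h3) (by positivity) hb0
    _ = |G i j| * b ^ 2 := by ring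

/-- Advantage decomposition: for stabilizing policies `K, K'`,
`xᵀP_{K'}x − xᵀP_Kx = ∑ₜ A_{K,K'}(x'_t)` with `x'_t = (A−BK')ᵗ x`. -/
theorem advantage_decomposition
    (d k : ℕ)
    (A : Matrix (Fin d) (Fin d) ℝ) (B : Matrix (Fin d) (Fin k) ℝ)
    (K K' : Matrix (Fin k) (Fin d) ℝ)
    (Q : Matrix (Fin d) (Fin d) ℝ) (R : Matrix (Fin k) (Fin k) ℝ)
    (hQ : Q.PosDef) (hR : R.PosDef)
    (hρ : spectralRadius ℂ ((A - B * K).map (algebraMap ℝ ℂ)) < 1)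
    (hρ' : spectralRadius ℂ ((A - B * K').map (algebraMap ℝ ℂ)) < 1)
    (P P' : Matrix (Fin d) (Fin d) ℝ)
    (hPsd : P.PosSemidef) (hPsd' : P'.PosSemidef)
    (hP : P = Q + Kᵀ * R * K + (A - B * K)ᵀ * P * (A - B * K))
    (hP' : P' = Q + K'ᵀ * R * K' + (A - B * K')ᵀ * P' * (A - B * K'))
    (x : Fin d → ℝ) :
    x ⬝ᵥ P'.mulVec x - x ⬝ᵥ P.mulVec x
      = ∑' t : ℕ,
          (2 * ((((A - B * K') ^ t).mulVec x) ⬝ᵥ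
              ((K' - K)ᵀ * ((R + Bᵀ * P * B) * K - Bᵀ * P * A)).mulVec
                (((A - B * K') ^ t).mulVec x))
          + (((A - B * K') ^ t).mulVec x) ⬝ᵥ
              ((K' - K)ᵀ * (R + Bᵀ * P * B) * (K' - K)).mulVec
                (((A - B * K') ^ t).mulVec x)) := by
  have hPt : Pᵀ = P := by
    have h := hPsd.1
    rwa [Matrix.IsHermitian, Matrix.conjTranspose_eq_transpose_of_trivial] at h
  have hRt : Rᵀ = R := by
    have h := hR.1
    rwa [Matrix.IsHermitian, Matrix.conjTranspose_eq_transpose_of_trivial] at h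
  set L' := A - B * K' with hL'def
  set C := (K' - K)ᵀ * ((R + Bᵀ * P * B) * K - Bᵀ * P * A) with hCdef
  set D := (K' - K)ᵀ * (R + Bᵀ * P * B) * (K' - K) with hDdef
  have key : P' - P = (C + Cᵀ + D) + L'ᵀ * (P' - P) * L' := by
    rw [hCdef, hDdef, hL'def]
    conv_lhs => rw [hP', hP]
    rw [hL'def]
    simp only [Matrix.transpose_sub, Matrix.transpose_mul, Matrix.transpose_add,
      Matrix.transpose_transpose, hPt, hRt, Matrix.mul_sub, Matrix.sub_mul, Matrix.mul_add, Matrix.add_mul, Matrix.mul_assoc]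
    abel
  -- abbreviations
  have dot_symm : ∀ (G : Matrix (Fin d) (Fin d) ℝ) (v : Fin d → ℝ),
      v ⬝ᵥ Gᵀ *ᵥ v = v ⬝ᵥ G *ᵥ v := by
    intro G v
    rw [Matrix.dotProduct_mulVec, Matrix.vecMul_transpose, dotProduct_comm]
  have quadLL : ∀ (G : Matrix (Fin d) (Fin d) ℝ) (w : Fin d → ℝ),
      w ⬝ᵥ (L'ᵀ * G * L') *ᵥ w = (L' *ᵥ w) ⬝ᵥ G *ᵥ (L' *ᵥ w) := by
    intro G w
    rw [← Matrix.mulVec_mulVec, ← Matrix.mulVec_mulVec, Matrix.dotProduct_mulVec,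
      Matrix.vecMul_transpose]
  set s : ℕ → ℝ := fun t =>
    2 * ((L' ^ t *ᵥ x) ⬝ᵥ C *ᵥ (L' ^ t *ᵥ x)) + (L' ^ t *ᵥ x) ⬝ᵥ D *ᵥ (L' ^ t *ᵥ x)
    with hs_def
  set F : ℕ → ℝ := fun t => (L' ^ t *ᵥ x) ⬝ᵥ (P' - P) *ᵥ (L' ^ t *ᵥ x) with hF_def
  have step : ∀ t : ℕ, F t = s t + F (t + 1) := by
    intro t
    have hz1 : L' *ᵥ (L' ^ t *ᵥ x) = L' ^ (t + 1) *ᵥ x := by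
      rw [Matrix.mulVec_mulVec, ← pow_succ']
    show (L' ^ t *ᵥ x) ⬝ᵥ (P' - P) *ᵥ (L' ^ t *ᵥ x) = _
    conv_lhs => rw [key]
    rw [Matrix.add_mulVec, dotProduct_add, quadLL, hz1,
      Matrix.add_mulVec, dotProduct_add, Matrix.add_mulVec, dotProduct_add,
      dot_symm C]
    show _ = (2 * ((L' ^ t *ᵥ x) ⬝ᵥ C *ᵥ (L' ^ t *ᵥ x))
        + (L' ^ t *ᵥ x) ⬝ᵥ D *ᵥ (L' ^ t *ᵥ x))
        + (L' ^ (t+1) *ᵥ x) ⬝ᵥ (P' - P) *ᵥ (L' ^ (t+1) *ᵥ x)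
    ring
  -- entrywise geometric bound
  obtain ⟨c, hc0, hc1, hev⟩ := pow_entry_bound d L' hρ'
  set X := ∑ j, |x j| with hX_def
  have hX0 : 0 ≤ X := Finset.sum_nonneg fun j _ => abs_nonneg _
  have hzb : ∀ᶠ t in atTop, ∀ i, |(L' ^ t *ᵥ x) i| ≤ c ^ t * X := by
    filter_upwards [hev] with t ht i
    have h1 : (L' ^ t *ᵥ x) i = ∑ j, (L' ^ t) i j * x j := by
      simp [Matrix.mulVec, dotProduct]
    rw [h1, hX_def, Finset.mul_sum]
    refine (Finset.abs_sum_le_sum_abs _ _).trans (Finset.sum_le_sum fun j _ => ?_)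
    rw [abs_mul]
    exact mul_le_mul_of_nonneg_right (ht i j) (abs_nonneg _)
  have hpow2 : ∀ t : ℕ, (c ^ t * X) ^ 2 = (c ^ 2) ^ t * X ^ 2 := by
    intro t
    rw [mul_pow, ← pow_mul, ← pow_mul, mul_comm t 2]
  have hcc : c ^ 2 < 1 := by nlinarith
  have hcc0 : (0:ℝ) ≤ c ^ 2 := by positivity
  -- limit of F
  have hF0 : Tendsto F atTop (𝓝 0) := by
    apply squeeze_zero_norm' (a := fun t =>
      ((∑ i, ∑ j, |(P' - P) i j|) * X ^ 2) * (c ^ 2) ^ t)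
    · filter_upwards [hzb] with t ht
      have := quad_abs_bound d (P' - P) (L' ^ t *ᵥ x) (c ^ t * X)
        (by positivity) ht
      rw [hpow2 t] at this
      calc ‖F t‖ = |(L' ^ t *ᵥ x) ⬝ᵥ (P' - P) *ᵥ (L' ^ t *ᵥ x)| := rfl
        _ ≤ (∑ i, ∑ j, |(P' - P) i j|) * ((c ^ 2) ^ t * X ^ 2) := this
        _ = ((∑ i, ∑ j, |(P' - P) i j|) * X ^ 2) * (c ^ 2) ^ t := by ring
    · have := (tendsto_pow_atTop_nhds_zero_of_lt_one hcc0 hcc).const_mul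
        ((∑ i, ∑ j, |(P' - P) i j|) * X ^ 2)
      simpa using this
  -- summability of s
  have hsum : Summable s := by
    apply Summable.of_norm_bounded_eventually_nat (g := fun t =>
      ((2 * (∑ i, ∑ j, |C i j|) + (∑ i, ∑ j, |D i j|)) * X ^ 2) * (c ^ 2) ^ t)
    · exact (summable_geometric_of_lt_one hcc0 hcc).mul_left _
    · filter_upwards [hzb] with t ht
      have hCb := quad_abs_bound d C (L' ^ t *ᵥ x) (c ^ t * X) (by positivity) ht
      have hDb := quad_abs_bound d D (L' ^ t *ᵥ x) (c ^ t * X) (by positivity) ht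
      rw [hpow2 t] at hCb hDb
      have : ‖s t‖ ≤ 2 * |(L' ^ t *ᵥ x) ⬝ᵥ C *ᵥ (L' ^ t *ᵥ x)|
          + |(L' ^ t *ᵥ x) ⬝ᵥ D *ᵥ (L' ^ t *ᵥ x)| := by
        calc ‖s t‖ = |2 * ((L' ^ t *ᵥ x) ⬝ᵥ C *ᵥ (L' ^ t *ᵥ x))
            + (L' ^ t *ᵥ x) ⬝ᵥ D *ᵥ (L' ^ t *ᵥ x)| := rfl
          _ ≤ |2 * ((L' ^ t *ᵥ x) ⬝ᵥ C *ᵥ (L' ^ t *ᵥ x))|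
            + |(L' ^ t *ᵥ x) ⬝ᵥ D *ᵥ (L' ^ t *ᵥ x)| := abs_add_le _ _
          _ = 2 * |(L' ^ t *ᵥ x) ⬝ᵥ C *ᵥ (L' ^ t *ᵥ x)|
            + |(L' ^ t *ᵥ x) ⬝ᵥ D *ᵥ (L' ^ t *ᵥ x)| := by
              rw [abs_mul, abs_two]
      calc ‖s t‖ ≤ 2 * |(L' ^ t *ᵥ x) ⬝ᵥ C *ᵥ (L' ^ t *ᵥ x)|
          + |(L' ^ t *ᵥ x) ⬝ᵥ D *ᵥ (L' ^ t *ᵥ x)| := this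
        _ ≤ 2 * ((∑ i, ∑ j, |C i j|) * ((c ^ 2) ^ t * X ^ 2))
          + (∑ i, ∑ j, |D i j|) * ((c ^ 2) ^ t * X ^ 2) := by
            have h2 : (0:ℝ) ≤ 2 := by norm_num
            gcongr
        _ = ((2 * (∑ i, ∑ j, |C i j|) + (∑ i, ∑ j, |D i j|)) * X ^ 2) * (c ^ 2) ^ t := by
            ring
  -- telescoping
  have htel : Tendsto (fun n => ∑ t ∈ Finset.range n, s t) atTop (𝓝 (F 0)) := by
    have heq : ∀ n, ∑ t ∈ Finset.range n, s t = F 0 - F n := by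
      intro n
      rw [← Finset.sum_range_sub' F n]
      exact Finset.sum_congr rfl fun t _ => by have := step t; linarith
    simp only [heq]
    simpa using tendsto_const_nhds.sub hF0
  have hfinal : (∑' t, s t) = F 0 := tendsto_nhds_unique hsum.hasSum.tendsto_sum_nat htel
  have hF0eq : F 0 = x ⬝ᵥ P' *ᵥ x - x ⬝ᵥ P *ᵥ x := by
    show (L' ^ 0 *ᵥ x) ⬝ᵥ (P' - P) *ᵥ (L' ^ 0 *ᵥ x) = _
    rw [pow_zero, Matrix.one_mulVec, Matrix.sub_mulVec, dotProduct_sub]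
  rw [← hF0eq, ← hfinal]
end

section
/- With E_K = (R + BᵀP_K B)K − BᵀP_K A and R + BᵀP_K B positive definite, the advantage satisfies A_{K,K′}(x) ≥ −Tr[x xᵀ E_Kᵀ (R + BᵀP_K B)^{-1} E_K] for every x ∈ R^d and every K′, where A_{K,K′}(x) = 2 xᵀ(K′−K)ᵀE_K x + xᵀ(K′−K)ᵀ(R + BᵀP_K B)(K′−K)x. -/
/-!
Write `M = R + BᵀPB` (positive definite), `E = MK - BᵀPA`, `y = (K' - K)x` and `e = Ex`. The
advantage is `2⟪y, e⟫ + ⟪y, My⟫` and the right-hand side is `-⟪e, M⁻¹e⟫`, so the claim is the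
completed square `0 ≤ ⟪y + M⁻¹e, M(y + M⁻¹e)⟫`.
-/

open Matrix

namespace Matrix

variable {m n α : Type*} [Fintype m] [Fintype n] [CommRing α]

theorem trace_vecMulVec_self_mul (x : n → α) (N : Matrix n n α) :
    (vecMulVec x x * N).trace = x ⬝ᵥ N *ᵥ x := by
  rw [vecMulVec_mul, trace_vecMulVec, dotProduct_comm, dotProduct_mulVec]

theorem dotProduct_transpose_mul_mulVec (x : n → α) (C D : Matrix m n α) :
    x ⬝ᵥ (Cᵀ * D) *ᵥ x = C *ᵥ x ⬝ᵥ D *ᵥ x := by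
  rw [← mulVec_mulVec, dotProduct_mulVec, vecMul_transpose]

theorem dotProduct_transpose_mul_mul_mulVec (x : n → α) (C D : Matrix m n α)
    (N : Matrix m m α) :
    x ⬝ᵥ (Cᵀ * N * D) *ᵥ x = C *ᵥ x ⬝ᵥ N *ᵥ (D *ᵥ x) := by
  rw [Matrix.mul_assoc, dotProduct_transpose_mul_mulVec, mulVec_mulVec]

theorem PosDef.neg_dotProduct_inv_mulVec_le [DecidableEq n] {M : Matrix n n ℝ}
    (hM : M.PosDef) (y e : n → ℝ) :
    -(e ⬝ᵥ M⁻¹ *ᵥ e) ≤ 2 * (y ⬝ᵥ e) + y ⬝ᵥ M *ᵥ y := by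
  have hMinv : M *ᵥ (M⁻¹ *ᵥ e) = e := by
    rw [mulVec_mulVec, mul_nonsing_inv M ((isUnit_iff_isUnit_det M).mp hM.isUnit), one_mulVec]
  have hcross : M⁻¹ *ᵥ e ⬝ᵥ M *ᵥ y = y ⬝ᵥ e := by
    rw [dotProduct_mulVec, ← mulVec_transpose, (isHermitian_iff_isSymm.mp hM.isHermitian).eq,
      hMinv, dotProduct_comm]
  have hsquare := hM.posSemidef.dotProduct_mulVec_nonneg (y + M⁻¹ *ᵥ e)
  rw [star_trivial, mulVec_add, dotProduct_add, add_dotProduct, add_dotProduct, hMinv, hcross,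
    dotProduct_comm (M⁻¹ *ᵥ e) e] at hsquare
  linarith

theorem PosDef.add_transpose_mul_mul_same {R : Matrix m m ℝ} {P : Matrix n n ℝ}
    (hR : R.PosDef) (hP : P.PosSemidef) (B : Matrix n m ℝ) : (R + Bᵀ * P * B).PosDef :=
  hR.add_posSemidef (hP.conjTranspose_mul_mul_same B)

end Matrix

/-- Lower bound on the advantage:
`A_{K,K'}(x) ≥ −Tr[xxᵀ E_Kᵀ (R + BᵀP_K B)⁻¹ E_K]`. -/
theorem advantage_lower_bound
    (d k : ℕ)
    (A : Matrix (Fin d) (Fin d) ℝ) (B : Matrix (Fin d) (Fin k) ℝ)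
    (K K' : Matrix (Fin k) (Fin d) ℝ)
    (R : Matrix (Fin k) (Fin k) ℝ) (P : Matrix (Fin d) (Fin d) ℝ)
    (hR : R.PosDef) (hP : P.PosSemidef)
    (x : Fin d → ℝ) :
    2 * (x ⬝ᵥ ((K' - K)ᵀ * ((R + Bᵀ * P * B) * K - Bᵀ * P * A)).mulVec x)
      + x ⬝ᵥ ((K' - K)ᵀ * (R + Bᵀ * P * B) * (K' - K)).mulVec x
    ≥ - (vecMulVec x x * ((R + Bᵀ * P * B) * K - Bᵀ * P * A)ᵀ *
          (R + Bᵀ * P * B)⁻¹ * ((R + Bᵀ * P * B) * K - Bᵀ * P * A)).trace := by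
  set M := R + Bᵀ * P * B
  set E := M * K - Bᵀ * P * A
  rw [Matrix.mul_assoc (vecMulVec x x * Eᵀ), Matrix.mul_assoc (vecMulVec x x),
    trace_vecMulVec_self_mul, ← Matrix.mul_assoc Eᵀ, dotProduct_transpose_mul_mul_mulVec x E,
    dotProduct_transpose_mul_mulVec, dotProduct_transpose_mul_mul_mulVec]
  exact (hR.add_transpose_mul_mul_same hP B).neg_dotProduct_inv_mulVec_le _ _
end

section
/- The global total cost decomposes as c_gt(x_t, u_t) = c̄(x̄_t, ū_t) + Σ_{l∈L} c̃^l(x̃^l_t, ũ^l_t), where c̄(x̄,ū) = x̄ᵀ(Q̄+Q̆)x̄ + ūᵀ(R̄+R̆)ū with Q̆ = diag(|N^1|Q_1,…,|N^L|Q_L), R̆ = diag(|N^1|R_1,…,|N^L|R_L), and c̃^l(x̃^l,ũ^l) = Σ_{i∈N^l}[(x̃^i)ᵀQ_l x̃^i + (ũ^i)ᵀR_l ũ^i]. -/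
open Matrix Finset

/-!
Everything reduces to bilinearity of `(v, w) ↦ vᵀ M w` and to `∑_{i ∈ N^l} x^i = |N^l| x̄^l`.
Cross-population terms collapse to `|N^l| |N^p| (x̄^l)ᵀ Q̄^{lp} x̄^p`. Within a population, the pairs
`i ≠ j` give `|N^l|² (x̄^l)ᵀ Q̄^{ll} x̄^l` minus the diagonal, leaving `∑_i (x^i)ᵀ Q_l x^i` with
`Q_l = q_l - q̄^{ll}`; the parallel-axis identity
`∑_i (x^i)ᵀ Q_l x^i = |N^l| (x̄^l)ᵀ Q_l x̄^l + ∑_i (x̃^i)ᵀ Q_l x̃^i` splits this into mean-field and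
deviation parts.
-/

section Bilinear

variable {R ι κ n : Type*} [CommRing R] [Fintype n]

theorem sum_dotProduct_mulVec_sum (M : Matrix n n R) (s : Finset ι) (t : Finset κ)
    (v : ι → n → R) (w : κ → n → R) :
    (∑ i ∈ s, v i) ⬝ᵥ M *ᵥ (∑ j ∈ t, w j) = ∑ i ∈ s, ∑ j ∈ t, v i ⬝ᵥ M *ᵥ w j := by
  rw [sum_dotProduct]
  simp only [mulVec_sum, dotProduct_sum]

theorem sum_sum_erase_dotProduct_mulVec [Fintype ι] [DecidableEq ι] (M : Matrix n n R)
    (v : ι → n → R) :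
    ∑ i, ∑ j ∈ univ.erase i, v i ⬝ᵥ M *ᵥ v j
      = (∑ i, v i) ⬝ᵥ M *ᵥ (∑ i, v i) - ∑ i, v i ⬝ᵥ M *ᵥ v i := by
  simp only [sum_dotProduct_mulVec_sum, ← sum_sub_distrib,
    sum_erase_eq_sub (mem_univ _)]

theorem sum_sub_dotProduct_mulVec_sub (M : Matrix n n R) (s : Finset ι) (v : ι → n → R)
    (c : n → R) :
    ∑ i ∈ s, (v i - c) ⬝ᵥ M *ᵥ (v i - c)
      = ∑ i ∈ s, v i ⬝ᵥ M *ᵥ v i - (∑ i ∈ s, v i) ⬝ᵥ M *ᵥ c - c ⬝ᵥ M *ᵥ (∑ i ∈ s, v i)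
        + #s • (c ⬝ᵥ M *ᵥ c) := by
  simp only [sub_dotProduct, mulVec_sub, dotProduct_sub, sum_dotProduct, mulVec_sum,
    dotProduct_sum, sum_sub_distrib, sum_const]
  abel

end Bilinear

section Mean

variable {𝕜 : Type*} [Field 𝕜] [CharZero 𝕜] {n d : ℕ}

theorem sum_eq_card_smul_of_eq_inv_smul_sum {E : Type*} [AddCommGroup E] [Module 𝕜 E]
    {v : Fin n → E} {vb : E} (hvb : vb = (n : 𝕜)⁻¹ • ∑ i, v i) :
    ∑ i, v i = (n : 𝕜) • vb := by
  rcases Nat.eq_zero_or_pos n with rfl | hn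
  · simp
  · rw [hvb, smul_inv_smul₀ (Nat.cast_ne_zero.mpr hn.ne')]

theorem sum_sum_dotProduct_mulVec_eq_mean {p : ℕ} (M : Matrix (Fin d) (Fin d) 𝕜)
    {v : Fin n → Fin d → 𝕜} {w : Fin p → Fin d → 𝕜} {vb wb : Fin d → 𝕜}
    (hvb : vb = (n : 𝕜)⁻¹ • ∑ i, v i) (hwb : wb = (p : 𝕜)⁻¹ • ∑ j, w j) :
    ∑ i, ∑ j, v i ⬝ᵥ M *ᵥ w j = ((n : 𝕜) * p) * (vb ⬝ᵥ M *ᵥ wb) := by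
  rw [← sum_dotProduct_mulVec_sum, sum_eq_card_smul_of_eq_inv_smul_sum hvb,
    sum_eq_card_smul_of_eq_inv_smul_sum hwb]
  simp only [smul_dotProduct, mulVec_smul, dotProduct_smul, smul_eq_mul]
  ring

theorem sum_dotProduct_mulVec_eq_mean_add_sum_sub (M : Matrix (Fin d) (Fin d) 𝕜)
    {v : Fin n → Fin d → 𝕜} {vb : Fin d → 𝕜} (hvb : vb = (n : 𝕜)⁻¹ • ∑ i, v i) :
    ∑ i, v i ⬝ᵥ M *ᵥ v i = n * (vb ⬝ᵥ M *ᵥ vb) + ∑ i, (v i - vb) ⬝ᵥ M *ᵥ (v i - vb) := by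
  rw [sum_sub_dotProduct_mulVec_sub, sum_eq_card_smul_of_eq_inv_smul_sum hvb, card_fin]
  simp only [smul_dotProduct, mulVec_smul, dotProduct_smul, smul_eq_mul, nsmul_eq_mul]
  ring

theorem population_cost_eq_mean_add_deviation (M N : Matrix (Fin d) (Fin d) 𝕜)
    {v : Fin n → Fin d → 𝕜} {vb : Fin d → 𝕜} (hvb : vb = (n : 𝕜)⁻¹ • ∑ i, v i) :
    ∑ i, v i ⬝ᵥ M *ᵥ v i + ∑ i, ∑ j ∈ univ.erase i, v i ⬝ᵥ N *ᵥ v j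
      = ((n : 𝕜) * n) * (vb ⬝ᵥ N *ᵥ vb) + n * (vb ⬝ᵥ (M - N) *ᵥ vb)
        + ∑ i, (v i - vb) ⬝ᵥ (M - N) *ᵥ (v i - vb) := by
  rw [add_assoc, ← sum_dotProduct_mulVec_eq_mean_add_sum_sub _ hvb,
    sum_sum_erase_dotProduct_mulVec, sum_dotProduct_mulVec_sum,
    sum_sum_dotProduct_mulVec_eq_mean _ hvb hvb]
  simp only [sub_mulVec, dotProduct_sub, sum_sub_distrib]
  ring

theorem exchangeable_cost_decomposition {L : ℕ} (m : Fin L → ℕ)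
    (q : Fin L → Matrix (Fin d) (Fin d) 𝕜) (qbar : Fin L → Fin L → Matrix (Fin d) (Fin d) 𝕜)
    (x : (l : Fin L) → Fin (m l) → Fin d → 𝕜) (xb : Fin L → Fin d → 𝕜)
    (hxb : ∀ l, xb l = (m l : 𝕜)⁻¹ • ∑ i, x l i) :
    ∑ l, ∑ i, x l i ⬝ᵥ q l *ᵥ x l i
      + ∑ l, ∑ i, ∑ j ∈ univ.erase i, x l i ⬝ᵥ qbar l l *ᵥ x l j
      + ∑ l, ∑ p ∈ univ.erase l, ∑ i, ∑ j, x l i ⬝ᵥ qbar l p *ᵥ x p j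
    = ∑ l, ∑ p, ((m l : 𝕜) * m p) * (xb l ⬝ᵥ qbar l p *ᵥ xb p)
      + ∑ l, (m l : 𝕜) * (xb l ⬝ᵥ (q l - qbar l l) *ᵥ xb l)
      + ∑ l, ∑ i, (x l i - xb l) ⬝ᵥ (q l - qbar l l) *ᵥ (x l i - xb l) := by
  have hwithin (l : Fin L) := population_cost_eq_mean_add_deviation (q l) (qbar l l) (hxb l)
  have hacross (l : Fin L) :
      ∑ p, ((m l : 𝕜) * m p) * (xb l ⬝ᵥ qbar l p *ᵥ xb p)
        = ((m l : 𝕜) * m l) * (xb l ⬝ᵥ qbar l l *ᵥ xb l)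
          + ∑ p ∈ univ.erase l, ∑ i, ∑ j, x l i ⬝ᵥ qbar l p *ᵥ x p j := by
    rw [← add_sum_erase _ _ (mem_univ l)]
    congr 1
    exact sum_congr rfl fun p _ =>
      (sum_sum_dotProduct_mulVec_eq_mean _ (hxb l) (hxb p)).symm
  rw [← sum_add_distrib, sum_congr rfl fun l _ => hwithin l,
    sum_congr rfl fun l _ => hacross l]
  simp only [sum_add_distrib]
  ring

end Mean

theorem global_cost_decomposition_general
    (L d k : ℕ) (m : Fin L → ℕ)
    (q : Fin L → Matrix (Fin d) (Fin d) ℝ)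
    (qbar : Fin L → Fin L → Matrix (Fin d) (Fin d) ℝ)
    (r : Fin L → Matrix (Fin k) (Fin k) ℝ)
    (rbar : Fin L → Fin L → Matrix (Fin k) (Fin k) ℝ)
    (x : (l : Fin L) → Fin (m l) → Fin d → ℝ)
    (u : (l : Fin L) → Fin (m l) → Fin k → ℝ)
    (xb : Fin L → Fin d → ℝ) (ub : Fin L → Fin k → ℝ)
    (hxb : ∀ l, xb l = (m l : ℝ)⁻¹ • ∑ i, x l i)
    (hub : ∀ l, ub l = (m l : ℝ)⁻¹ • ∑ i, u l i) :
    -- global cost  c_gt(x,u) = xᵀQx + uᵀRu  with partially exchangeable blocks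
    ((∑ l, ∑ i, x l i ⬝ᵥ (q l).mulVec (x l i))
      + (∑ l, ∑ i, ∑ j ∈ Finset.univ.erase i, x l i ⬝ᵥ (qbar l l).mulVec (x l j))
      + (∑ l, ∑ p ∈ Finset.univ.erase l, ∑ i, ∑ j, x l i ⬝ᵥ (qbar l p).mulVec (x p j))
      + (∑ l, ∑ i, u l i ⬝ᵥ (r l).mulVec (u l i))
      + (∑ l, ∑ i, ∑ j ∈ Finset.univ.erase i, u l i ⬝ᵥ (rbar l l).mulVec (u l j))
      + (∑ l, ∑ p ∈ Finset.univ.erase l, ∑ i, ∑ j, u l i ⬝ᵥ (rbar l p).mulVec (u p j)))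
    = -- mean-field cost  c̄(x̄,ū) = x̄ᵀ(Q̄+Q̆)x̄ + ūᵀ(R̄+R̆)ū
      ((∑ l, ∑ p, ((m l : ℝ) * (m p : ℝ)) * (xb l ⬝ᵥ (qbar l p).mulVec (xb p)))
        + (∑ l, (m l : ℝ) * (xb l ⬝ᵥ (q l - qbar l l).mulVec (xb l)))
        + (∑ l, ∑ p, ((m l : ℝ) * (m p : ℝ)) * (ub l ⬝ᵥ (rbar l p).mulVec (ub p)))
        + (∑ l, (m l : ℝ) * (ub l ⬝ᵥ (r l - rbar l l).mulVec (ub l))))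
      -- plus the subpopulation deviation costs  ∑_l c̃^l(x̃^l, ũ^l)
      + ∑ l, ∑ i,
          ((x l i - xb l) ⬝ᵥ (q l - qbar l l).mulVec (x l i - xb l)
            + (u l i - ub l) ⬝ᵥ (r l - rbar l l).mulVec (u l i - ub l)) := by
  rw [sum_congr rfl fun l _ => sum_add_distrib, sum_add_distrib]
  linear_combination exchangeable_cost_decomposition m q qbar x xb hxb
    + exchangeable_cost_decomposition m r rbar u ub hub

/-- The global total cost decomposes as
`c_gt(x,u) = c̄(x̄,ū) + ∑_l c̃^l(x̃^l, ũ^l)`. -/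
theorem global_cost_decomposition
    (L d k : ℕ) (m : Fin L → ℕ) (hm : ∀ l, 0 < m l)
    (q : Fin L → Matrix (Fin d) (Fin d) ℝ)
    (qbar : Fin L → Fin L → Matrix (Fin d) (Fin d) ℝ)
    (r : Fin L → Matrix (Fin k) (Fin k) ℝ)
    (rbar : Fin L → Fin L → Matrix (Fin k) (Fin k) ℝ)
    (hq : ∀ l, (q l).IsSymm) (hqbar : ∀ l p, (qbar l p).IsSymm)
    (hr : ∀ l, (r l).IsSymm) (hrbar : ∀ l p, (rbar l p).IsSymm)
    (x : (l : Fin L) → Fin (m l) → Fin d → ℝ)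
    (u : (l : Fin L) → Fin (m l) → Fin k → ℝ)
    (xb : Fin L → Fin d → ℝ) (ub : Fin L → Fin k → ℝ)
    (hxb : ∀ l, xb l = (m l : ℝ)⁻¹ • ∑ i, x l i)
    (hub : ∀ l, ub l = (m l : ℝ)⁻¹ • ∑ i, u l i) :
    -- global cost  c_gt(x,u) = xᵀQx + uᵀRu  with partially exchangeable blocks
    ((∑ l, ∑ i, x l i ⬝ᵥ (q l).mulVec (x l i))
      + (∑ l, ∑ i, ∑ j ∈ Finset.univ.erase i, x l i ⬝ᵥ (qbar l l).mulVec (x l j))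
      + (∑ l, ∑ p ∈ Finset.univ.erase l, ∑ i, ∑ j, x l i ⬝ᵥ (qbar l p).mulVec (x p j))
      + (∑ l, ∑ i, u l i ⬝ᵥ (r l).mulVec (u l i))
      + (∑ l, ∑ i, ∑ j ∈ Finset.univ.erase i, u l i ⬝ᵥ (rbar l l).mulVec (u l j))
      + (∑ l, ∑ p ∈ Finset.univ.erase l, ∑ i, ∑ j, u l i ⬝ᵥ (rbar l p).mulVec (u p j)))
    = -- mean-field cost  c̄(x̄,ū) = x̄ᵀ(Q̄+Q̆)x̄ + ūᵀ(R̄+R̆)ū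
      ((∑ l, ∑ p, ((m l : ℝ) * (m p : ℝ)) * (xb l ⬝ᵥ (qbar l p).mulVec (xb p)))
        + (∑ l, (m l : ℝ) * (xb l ⬝ᵥ (q l - qbar l l).mulVec (xb l)))
        + (∑ l, ∑ p, ((m l : ℝ) * (m p : ℝ)) * (ub l ⬝ᵥ (rbar l p).mulVec (ub p)))
        + (∑ l, (m l : ℝ) * (ub l ⬝ᵥ (r l - rbar l l).mulVec (ub l))))
      -- plus the subpopulation deviation costs  ∑_l c̃^l(x̃^l, ũ^l)
      + ∑ l, ∑ i,
          ((x l i - xb l) ⬝ᵥ (q l - qbar l l).mulVec (x l i - xb l)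
            + (u l i - ub l) ⬝ᵥ (r l - rbar l l).mulVec (u l i - ub l)) :=
  global_cost_decomposition_general L d k m q qbar r rbar x u xb ub hxb hub
end

section
/- Cost-difference identity for the natural gradient step: if K′ = K − ηE_K with E_K = (R+BᵀP_K B)K − BᵀP_K A and both K, K′ stabilizing, then C(K′) − C(K) = −2η·Tr(Σ_{K′} E_Kᵀ E_K) + η²·Tr[Σ_{K′} E_Kᵀ(R + BᵀP_K B)E_K]. -/
/-!
Both value matrices solve Lyapunov equations, so their difference `D = P' - P` satisfies
`D = Fᵀ D F + Adv` with `F = A - B K'` the closed loop under `K'` and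
`Adv = η² Eᵀ (R + Bᵀ P B) E - 2η Eᵀ E` the one-step advantage matrix of switching from `K`
to `K'`.
Pairing this with the Lyapunov equation `Σ' = Φσ + F Σ' Fᵀ` of the stationary covariance moves
`F` across the trace:
`Tr (D Φσ) = Tr (D (Σ' - F Σ' Fᵀ)) = Tr ((D - Fᵀ D F) Σ') = Tr (Adv Σ')`.
This is the summed advantage over the trajectory, in matrix form.

The advantage formula needs `P` symmetric, which holds because `Pᵀ - P` solves the homogeneous
Lyapunov equation of the stable closed loop `A - B K`, whose only solution is `0`.
-/

open Matrix Filter Topology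

theorem tendsto_pow_atTop_nhds_zero_of_spectralRadius_lt_one {𝔸 : Type*} [NormedRing 𝔸]
    [NormedAlgebra ℂ 𝔸] [CompleteSpace 𝔸] {a : 𝔸} (ha : spectralRadius ℂ a < 1) :
    Tendsto (fun n : ℕ ↦ a ^ n) atTop (𝓝 0) := by
  obtain ⟨r, har, hr1⟩ := ENNReal.lt_iff_exists_nnreal_btwn.1 ha
  have hbound : ∀ᶠ n : ℕ in atTop, ‖a ^ n‖ ≤ (r : ℝ) ^ n := by
    have hgelfand := spectrum.pow_nnnorm_pow_one_div_tendsto_nhds_spectralRadius a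
    filter_upwards [hgelfand.eventually_lt_const har, eventually_ge_atTop 1] with n hn hn1
    have hn0 : (n : ℝ) ≠ 0 := by positivity
    have h := ENNReal.rpow_le_rpow hn.le (z := n) (by positivity)
    rw [← ENNReal.rpow_mul, one_div, inv_mul_cancel₀ hn0, ENNReal.rpow_one,
      ENNReal.rpow_natCast, ← ENNReal.coe_pow, ENNReal.coe_le_coe] at h
    exact_mod_cast h
  exact squeeze_zero_norm' hbound
    (tendsto_pow_atTop_nhds_zero_of_lt_one r.coe_nonneg (by exact_mod_cast hr1))

namespace Matrix

theorem trace_mul_sub_mul_mul_transpose {n R : Type*} [Fintype n] [CommRing R]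
    (X S F : Matrix n n R) :
    (X * (S - F * S * Fᵀ)).trace = ((X - Fᵀ * X * F) * S).trace := by
  have hcyc : (X * (F * S * Fᵀ)).trace = (Fᵀ * X * F * S).trace := by
    rw [← Matrix.mul_assoc, trace_mul_comm, ← Matrix.mul_assoc, ← Matrix.mul_assoc]
  rw [Matrix.mul_sub, Matrix.sub_mul, trace_sub, trace_sub, hcyc]

variable {n : Type*} [Fintype n] [DecidableEq n]

def IsSchurStable (G : Matrix n n ℝ) : Prop :=
  spectralRadius ℂ (G.map (algebraMap ℝ ℂ)) < 1

theorem IsSchurStable.tendsto_pow {G : Matrix n n ℝ} (hG : G.IsSchurStable) :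
    Tendsto (fun k : ℕ ↦ G ^ k) atTop (𝓝 0) := by
  have hC : Tendsto (fun k : ℕ ↦ (G.map (algebraMap ℝ ℂ)) ^ k) atTop (𝓝 0) := by
    -- any algebra norm does: it induces the entrywise topology
    open scoped Matrix.Norms.Operator in
    exact tendsto_pow_atTop_nhds_zero_of_spectralRadius_lt_one hG
  simp_rw [← Matrix.map_pow] at hC
  simpa [Function.comp_def, Matrix.map_map] using
    ((continuous_id.matrix_map Complex.continuous_re).tendsto 0).comp hC

theorem IsSchurStable.eq_zero_of_eq_transpose_mul_mul {G X : Matrix n n ℝ}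
    (hG : G.IsSchurStable) (hX : X = Gᵀ * X * G) : X = 0 := by
  have hpow : ∀ k : ℕ, X = (G ^ k)ᵀ * X * G ^ k := by
    intro k
    induction k with
    | zero => simp
    | succ k ih =>
      calc X = (G ^ k)ᵀ * (Gᵀ * X * G) * G ^ k := by rwa [← hX]
        _ = (G ^ (k + 1))ᵀ * X * G ^ (k + 1) := by
          simp only [pow_succ', transpose_mul, Matrix.mul_assoc]
  have hlim : Tendsto (fun k : ℕ ↦ (G ^ k)ᵀ * X * G ^ k) atTop
      (𝓝 ((0 : Matrix n n ℝ)ᵀ * X * 0)) :=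
    (((continuous_id.matrix_transpose.matrix_mul continuous_const).matrix_mul
      continuous_id).tendsto 0).comp hG.tendsto_pow
  rw [← funext hpow, Matrix.mul_zero] at hlim
  exact tendsto_nhds_unique tendsto_const_nhds hlim

theorem IsSchurStable.isSymm_of_eq_add_transpose_mul_mul {G M X : Matrix n n ℝ}
    (hG : G.IsSchurStable) (hM : M.IsSymm) (hX : X = M + Gᵀ * X * G) : X.IsSymm := by
  have hXT : Xᵀ = M + Gᵀ * Xᵀ * G := by
    conv_lhs => rw [hX]
    simp [transpose_mul, hM.eq, Matrix.mul_assoc]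
  have hskew : Xᵀ - X = Gᵀ * (Xᵀ - X) * G := by
    calc Xᵀ - X = (M + Gᵀ * Xᵀ * G) - (M + Gᵀ * X * G) := by rw [← hXT, ← hX]
      _ = Gᵀ * (Xᵀ - X) * G := by
        simp only [Matrix.mul_sub, Matrix.sub_mul, add_sub_add_left_eq_sub]
  exact sub_eq_zero.1 (hG.eq_zero_of_eq_transpose_mul_mul hskew)

end Matrix

-- The terms linear in η cancel because `Bᵀ P (A - B K) - R K = -E`.
theorem natural_gradient_step_advantage {m n 𝕜 : Type*} [Fintype m] [Fintype n] [CommRing 𝕜]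
    (A : Matrix n n 𝕜) (B : Matrix n m 𝕜) (K E : Matrix m n 𝕜) (P : Matrix n n 𝕜)
    (R : Matrix m m 𝕜) (η : 𝕜) (hP : P.IsSymm) (hR : R.IsSymm)
    (hE : E = (R + Bᵀ * P * B) * K - Bᵀ * P * A) :
    (K - η • E)ᵀ * R * (K - η • E) + (A - B * (K - η • E))ᵀ * P * (A - B * (K - η • E))
      - (Kᵀ * R * K + (A - B * K)ᵀ * P * (A - B * K))
      = η ^ 2 • (Eᵀ * (R + Bᵀ * P * B) * E) - (2 * η) • (Eᵀ * E) := by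
  subst hE
  simp only [transpose_sub, transpose_add, transpose_mul, transpose_smul, transpose_transpose,
    hP.eq, hR.eq]
  simp only [Matrix.sub_mul, Matrix.mul_sub, Matrix.add_mul, Matrix.mul_add, Matrix.smul_mul,
    Matrix.mul_smul, smul_sub, smul_add, smul_smul, Matrix.mul_assoc]
  module

theorem cost_difference_identity_general
    (d k : ℕ)
    (A : Matrix (Fin d) (Fin d) ℝ) (B : Matrix (Fin d) (Fin k) ℝ)
    (K K' E : Matrix (Fin k) (Fin d) ℝ)
    (Q Φσ : Matrix (Fin d) (Fin d) ℝ) (R : Matrix (Fin k) (Fin k) ℝ)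
    (σ η : ℝ)
    (hQ : Q.PosDef) (hR : R.PosDef)
    (P P' S' : Matrix (Fin d) (Fin d) ℝ)
    (hρ : spectralRadius ℂ ((A - B * K).map (algebraMap ℝ ℂ)) < 1)
    (hP : P = Q + Kᵀ * R * K + (A - B * K)ᵀ * P * (A - B * K))
    (hP' : P' = Q + K'ᵀ * R * K' + (A - B * K')ᵀ * P' * (A - B * K'))
    (hS' : S' = Φσ + (A - B * K') * S' * (A - B * K')ᵀ)
    (hE : E = (R + Bᵀ * P * B) * K - Bᵀ * P * A)
    (hK' : K' = K - η • E) :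
    ((P' * Φσ).trace + σ ^ 2 * R.trace) - ((P * Φσ).trace + σ ^ 2 * R.trace)
      = -2 * η * (S' * Eᵀ * E).trace
        + η ^ 2 * (S' * Eᵀ * (R + Bᵀ * P * B) * E).trace := by
  have hRs : R.IsSymm := isHermitian_iff_isSymm.1 hR.isHermitian
  have hQKRK : (Q + Kᵀ * R * K).IsSymm :=
    (isHermitian_iff_isSymm.1 hQ.isHermitian).add
      (by simp [IsSymm, transpose_mul, hRs.eq, Matrix.mul_assoc])
  have hPs : P.IsSymm :=
    (show (A - B * K).IsSchurStable from hρ).isSymm_of_eq_add_transpose_mul_mul hQKRK hP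
  set F := A - B * K' with hF
  have hStein : P' - P - Fᵀ * (P' - P) * F
      = η ^ 2 • (Eᵀ * (R + Bᵀ * P * B) * E) - (2 * η) • (Eᵀ * E) := by
    rw [← natural_gradient_step_advantage A B K E P R η hPs hRs hE, ← hK', ← hF]
    calc P' - P - Fᵀ * (P' - P) * F
        = (Q + K'ᵀ * R * K' + Fᵀ * P' * F)
          - (Q + Kᵀ * R * K + (A - B * K)ᵀ * P * (A - B * K)) - Fᵀ * (P' - P) * F := by
          rw [← hP', ← hP]
      _ = _ := by simp only [Matrix.mul_sub, Matrix.sub_mul]; abel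
  have hΦσ : Φσ = S' - F * S' * Fᵀ := eq_sub_of_add_eq hS'.symm
  calc ((P' * Φσ).trace + σ ^ 2 * R.trace) - ((P * Φσ).trace + σ ^ 2 * R.trace)
      = ((P' - P) * (S' - F * S' * Fᵀ)).trace := by
        rw [← hΦσ, Matrix.sub_mul, trace_sub]; ring
    _ = ((η ^ 2 • (Eᵀ * (R + Bᵀ * P * B) * E) - (2 * η) • (Eᵀ * E)) * S').trace := by
        rw [trace_mul_sub_mul_mul_transpose, hStein]
    _ = -2 * η * (S' * Eᵀ * E).trace + η ^ 2 * (S' * Eᵀ * (R + Bᵀ * P * B) * E).trace := by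
        rw [Matrix.sub_mul, trace_sub, smul_mul, smul_mul, trace_smul, trace_smul,
          trace_mul_comm _ S', trace_mul_comm _ S']
        simp only [smul_eq_mul, Matrix.mul_assoc]
        ring

/-- Cost-difference identity for the natural gradient step `K' = K − ηE_K`:
`C(K') − C(K) = −2η Tr(Σ_{K'}E_KᵀE_K) + η² Tr[Σ_{K'}E_Kᵀ(R + BᵀP_KB)E_K]`. -/
theorem cost_difference_identity
    (d k : ℕ)
    (A : Matrix (Fin d) (Fin d) ℝ) (B : Matrix (Fin d) (Fin k) ℝ)
    (K K' E : Matrix (Fin k) (Fin d) ℝ)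
    (Q Φσ : Matrix (Fin d) (Fin d) ℝ) (R : Matrix (Fin k) (Fin k) ℝ)
    (σ η : ℝ) (hσ : 0 ≤ σ)
    (hQ : Q.PosDef) (hR : R.PosDef) (hΦσ : Φσ.PosDef)
    (P P' S' : Matrix (Fin d) (Fin d) ℝ)
    (hρ : spectralRadius ℂ ((A - B * K).map (algebraMap ℝ ℂ)) < 1)
    (hρ' : spectralRadius ℂ ((A - B * K').map (algebraMap ℝ ℂ)) < 1)
    (hP : P = Q + Kᵀ * R * K + (A - B * K)ᵀ * P * (A - B * K))
    (hP' : P' = Q + K'ᵀ * R * K' + (A - B * K')ᵀ * P' * (A - B * K'))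
    (hS' : S' = Φσ + (A - B * K') * S' * (A - B * K')ᵀ)
    (hE : E = (R + Bᵀ * P * B) * K - Bᵀ * P * A)
    (hK' : K' = K - η • E) :
    ((P' * Φσ).trace + σ ^ 2 * R.trace) - ((P * Φσ).trace + σ ^ 2 * R.trace)
      = -2 * η * (S' * Eᵀ * E).trace
        + η ^ 2 * (S' * Eᵀ * (R + Bᵀ * P * B) * E).trace :=
  cost_difference_identity_general d k A B K K' E Q Φσ R σ η hQ hR P P' S' hρ hP hP' hS' hE hK'
end
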